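/- Fix j, k ≥ 0 and a family of elements x_{μ,ζ,ξ,ν} ∈ A indexed by words μ, ν of length j over Σ^ρ and words ζ, ξ of length k over Σ^η. If Σ_{μ,ν,ζ,ξ} s_μ t_ζ π(x_{μ,ζ,ξ,ν}) t_ξ* s_ν* = 0 in B, then η_ζ(ρ_μ(1)) · x_{μ,ζ,ξ,ν} · η_ξ(ρ_ν(1)) = 0 in A for every index (μ,ζ,ξ,ν), and consequently each summand s_μ t_ζ π(x_{μ,ζ,ξ,ν}) t_ξ* s_ν* is zero. -/

import Mathlib

open scoped Classical

variable (A : Type*) [NormedRing A] [StarRing A] [CStarRing A] [CompleteSpace A]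
  [NormedAlgebra ℂ A] [StarModule ℂ A] [PartialOrder A] [StarOrderedRing A]

/-- A `C*`-symbolic dynamical system `(A, ρ, S)`: a finite family of (central, essential,
faithful) `*`-endomorphisms of a unital `C*`-algebra `A` indexed by a finite alphabet `S`. -/
structure CSDS (S : Type*) [Fintype S] where
  ρ : S → A →⋆ₙₐ[ℂ] A
  unit_ne_zero : ∀ α, ρ α 1 ≠ 0
  central : ∀ α, ∀ x ∈ Set.center A, ρ α x ∈ Set.center A
  essential : 1 ≤ ∑ α, ρ α 1
  faithful : ∀ x : A, x ≠ 0 → ∃ α, ρ α x ≠ 0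

/-- A `C*`-textile dynamical system `(A, ρ, η, Σ^ρ, Σ^η, κ)`. -/
structure CTDS (Sρ Sη : Type*) [Fintype Sρ] [Fintype Sη] where
  rs : CSDS A Sρ
  es : CSDS A Sη
  κ : {p : Sρ × Sη // ∃ x, es.ρ p.2 (rs.ρ p.1 x) ≠ 0} →
      {q : Sη × Sρ // ∃ x, rs.ρ q.2 (es.ρ q.1 x) ≠ 0}
  κ_bij : Function.Bijective κ
  commrel : ∀ p, ∀ x, es.ρ p.1.2 (rs.ρ p.1.1 x) = rs.ρ (κ p).1.2 (es.ρ (κ p).1.1 x)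

variable {A}
variable {Sρ Sη : Type*} [Fintype Sρ] [Fintype Sη]

namespace CTDS

/-- The alphabet `Σ_κ` of the textile system: pairs `(α, b) ∈ Σ^{ρη}`,
identified with quadruples `(α, b, a, β)` with `κ(α,b) = (a,β)`. -/
abbrev SigmaKappa (T : CTDS A Sρ Sη) : Type _ :=
  {p : Sρ × Sη // ∃ x, T.es.ρ p.2 (T.rs.ρ p.1 x) ≠ 0}

variable (T : CTDS A Sρ Sη)


noncomputable instance (T : CTDS A Sρ Sη) : Fintype T.SigmaKappa := Fintype.ofFinite _

end CTDS

variable {B : Type*} [NormedRing B] [StarRing B] [CStarRing B] [CompleteSpace B]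
  [NormedAlgebra ℂ B] [StarModule ℂ B]

/-- `ρ_μ = ρ_{μ_j} ∘ ⋯ ∘ ρ_{μ_1}` applied to `x`. -/
noncomputable def rhoW (T : CTDS A Sρ Sη) (μ : List Sρ) (x : A) : A :=
  μ.foldl (fun y α => T.rs.ρ α y) x

/-- `η_ζ = η_{ζ_k} ∘ ⋯ ∘ η_{ζ_1}` applied to `x`. -/
noncomputable def etaW (T : CTDS A Sρ Sη) (ζ : List Sη) (x : A) : A :=
  ζ.foldl (fun y a => T.es.ρ a y) x

/-!
Multiply the vanishing sum by `t_ζ⋆ s_μ⋆` on the left and by `s_ν t_ξ` on the right. The range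
projections `s_α s_α⋆` are projections with sum `1` in a C*-algebra, hence mutually orthogonal, so
for words of equal length `s_μ⋆ π(z) s_μ' = δ_{μ,μ'} π(ρ_μ(z))`, and likewise for `t`. Only the
summand indexed by `(μ, ζ, ξ, ν)` survives, and it becomes `π(η_ζ(ρ_μ(1)) x η_ξ(ρ_ν(1)))`;
injectivity of `π` gives the first claim. For the second, `s_μ t_ζ = s_μ t_ζ π(η_ζ(ρ_μ(1)))`,
so each summand equals `s_μ t_ζ π(η_ζ(ρ_μ(1)) x η_ξ(ρ_ν(1))) t_ξ⋆ s_ν⋆ = 0`.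
-/

open Finset

theorem isStarProjection_mul_star_self {R : Type*} [Semigroup R] [StarMul R] {u : R}
    (hu : u * star u * u = u) : IsStarProjection (u * star u) where
  isIdempotentElem := by rw [IsIdempotentElem, ← mul_assoc, hu]
  isSelfAdjoint := .mul_star_self u

/- `∑ l, p j * p l * p j = p j` is a sum of the positive elements `(p l * p j)⋆ (p l * p j)`,
so those with `l ≠ j` vanish. -/
theorem IsStarProjection.mul_eq_zero_of_sum_eq_one {ι : Type*} [Fintype ι] {p : ι → B}
    (hp : ∀ i, IsStarProjection (p i)) (hsum : ∑ i, p i = 1) {i j : ι} (hij : i ≠ j) :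
    p i * p j = 0 := by
  let : CStarAlgebra B := {}
  let : PartialOrder B := CStarAlgebra.spectralOrder B
  let : StarOrderedRing B := CStarAlgebra.spectralOrderedRing B
  have hterm : ∀ l, p j * p l * p j = star (p l * p j) * (p l * p j) := fun l => by
    rw [star_mul, (hp j).isSelfAdjoint.star_eq, (hp l).isSelfAdjoint.star_eq]
    calc p j * p l * p j = p j * (p l * p l) * p j := by rw [(hp l).isIdempotentElem.eq]
      _ = p j * p l * (p l * p j) := by noncomm_ring
  have hrest : ∑ l ∈ univ.erase j, p j * p l * p j = 0 := by
    have htotal : ∑ l, p j * p l * p j = p j := by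
      rw [← sum_mul, ← mul_sum, hsum, mul_one, (hp j).isIdempotentElem.eq]
    rw [← add_sum_erase _ _ (mem_univ j), (hp j).isIdempotentElem.eq,
      (hp j).isIdempotentElem.eq] at htotal
    exact add_eq_left.1 htotal
  have hij0 : star (p i * p j) * (p i * p j) = 0 := by
    rw [← hterm]
    exact (sum_eq_zero_iff_of_nonneg fun l _ => hterm l ▸ star_mul_self_nonneg _).1 hrest i
      (mem_erase.2 ⟨hij, mem_univ i⟩)
  exact (CStarRing.star_mul_self_eq_zero_iff _).1 hij0

theorem pairwise_star_mul_eq_zero_of_sum_mul_star_eq_one {ι : Type*} [Fintype ι] {u : ι → B}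
    (hu : ∀ i, u i * star (u i) * u i = u i) (hsum : ∑ i, u i * star (u i) = 1) :
    Pairwise fun i j => star (u i) * u j = 0 := by
  intro i j hij
  have hleft : star (u i) = star (u i) * (u i * star (u i)) := by
    conv_lhs => rw [← hu i]
    simp only [star_mul, star_star, mul_assoc]
  rw [hleft, ← hu j]
  calc star (u i) * (u i * star (u i)) * (u j * star (u j) * u j)
      = star (u i) * ((u i * star (u i)) * (u j * star (u j))) * u j := by noncomm_ring
    _ = 0 := by
      rw [IsStarProjection.mul_eq_zero_of_sum_eq_one
        (fun i => isStarProjection_mul_star_self (hu i)) hsum hij, mul_zero, zero_mul]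

/-- The relations `(ρ)` for the family `u` over `π`, except `∑ i, u i * star (u i) = 1`;
`σ x i` stands for `ρ_i(x)`. -/
structure IsSymbolicRep {M R F ι : Type*} [Ring R] [StarRing R] [FunLike F M R]
    (π : F) (u : ι → R) (σ : M → ι → M) : Prop where
  mul_star_mul_self : ∀ i, u i * star (u i) * u i = u i
  commute_mul_star_self : ∀ x i, π x * (u i * star (u i)) = u i * star (u i) * π x
  star_mul_map_mul : ∀ x i, star (u i) * π x * u i = π (σ x i)

namespace IsSymbolicRep

variable {M R F ι κ : Type*} [Ring R] [StarRing R] [FunLike F M R] {π : F}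
  {u : ι → R} {σ : M → ι → M} {v : κ → R} {τ : M → κ → M}

theorem map_mul_eq (h : IsSymbolicRep π u σ) (z : M) (i : ι) :
    π z * u i = u i * π (σ z i) := by
  calc π z * u i = π z * (u i * star (u i)) * u i := by rw [mul_assoc, h.mul_star_mul_self]
    _ = u i * (star (u i) * π z * u i) := by
      rw [h.commute_mul_star_self]; simp only [mul_assoc]
    _ = u i * π (σ z i) := by rw [h.star_mul_map_mul]

theorem map_mul_prod_map (h : IsSymbolicRep π u σ) (l : List ι) (z : M) :
    π z * (l.map u).prod = (l.map u).prod * π (l.foldl σ z) := by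
  induction l generalizing z with
  | nil => simp
  | cons i l ih =>
    simp only [List.map_cons, List.prod_cons, List.foldl_cons]
    rw [← mul_assoc, h.map_mul_eq, mul_assoc, ih, mul_assoc]

theorem prod_map_mul_map_foldl_one [Monoid M] [MonoidHomClass F M R]
    (h : IsSymbolicRep π u σ) (l : List ι) :
    (l.map u).prod * π (l.foldl σ 1) = (l.map u).prod := by
  rw [← h.map_mul_prod_map, map_one, one_mul]

theorem star_prod_map_mul_map_mul_prod_map (h : IsSymbolicRep π u σ) (l : List ι) (z : M) :
    star (l.map u).prod * π z * (l.map u).prod = π (l.foldl σ z) := by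
  induction l generalizing z with
  | nil => simp
  | cons i l ih =>
    simp only [List.map_cons, List.prod_cons, List.foldl_cons, star_mul]
    rw [← ih, ← h.star_mul_map_mul]
    simp only [mul_assoc]

theorem star_mul_map_mul_of_ne (h : IsSymbolicRep π u σ)
    (hortho : Pairwise fun i j => star (u i) * u j = 0) {i j : ι} (hij : i ≠ j) (z : M) :
    star (u i) * π z * u j = 0 := by
  calc star (u i) * π z * u j = star (u i) * (π z * (u j * star (u j))) * u j := by
        conv_lhs => rw [← h.mul_star_mul_self j]
        simp only [mul_assoc]
    _ = star (u i) * u j * (star (u j) * π z * u j) := by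
        rw [h.commute_mul_star_self]; simp only [mul_assoc]
    _ = 0 := by rw [hortho hij, zero_mul]

theorem star_prod_map_mul_map_mul_prod_map_of_ne (h : IsSymbolicRep π u σ)
    (hortho : Pairwise fun i j => star (u i) * u j = 0) :
    ∀ {l l' : List ι}, l.length = l'.length → l ≠ l' → ∀ z : M,
      star (l.map u).prod * π z * (l'.map u).prod = 0
  | [], [], _, hne, _ => absurd rfl hne
  | i :: l, i' :: l', hlen, hne, z => by
    simp only [List.map_cons, List.prod_cons, star_mul]
    by_cases hi : i = i'
    · subst hi
      have hl : l ≠ l' := fun hl => hne (hl ▸ rfl)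
      rw [← h.star_prod_map_mul_map_mul_prod_map_of_ne hortho (by simpa using hlen) hl (σ z i),
        ← h.star_mul_map_mul]
      simp only [mul_assoc]
    · calc star (l.map u).prod * star (u i) * π z * (u i' * (l'.map u).prod)
          = star (l.map u).prod * (star (u i) * π z * u i') * (l'.map u).prod := by
            simp only [mul_assoc]
        _ = 0 := by rw [h.star_mul_map_mul_of_ne hortho hi, mul_zero, zero_mul]

variable (hu : IsSymbolicRep π u σ) (hv : IsSymbolicRep π v τ)
include hu hv

theorem star_mul_map_mul_self (l : List ι) (m : List κ) (z : M) :
    star ((l.map u).prod * (m.map v).prod) * π z * ((l.map u).prod * (m.map v).prod) =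
      π (m.foldl τ (l.foldl σ z)) := by
  rw [← hv.star_prod_map_mul_map_mul_prod_map, ← hu.star_prod_map_mul_map_mul_prod_map]
  simp only [star_mul, mul_assoc]

theorem star_mul_map_mul_eq_ite (huo : Pairwise fun i j => star (u i) * u j = 0)
    (hvo : Pairwise fun i j => star (v i) * v j = 0) {l l' : List ι} {m m' : List κ}
    (hl : l.length = l'.length) (hm : m.length = m'.length) (z : M) :
    star ((l.map u).prod * (m.map v).prod) * π z * ((l'.map u).prod * (m'.map v).prod) =
      if l = l' ∧ m = m' then π (m.foldl τ (l.foldl σ z)) else 0 := by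
  have hregroup : star ((l.map u).prod * (m.map v).prod) * π z *
      ((l'.map u).prod * (m'.map v).prod) =
      star (m.map v).prod * (star (l.map u).prod * π z * (l'.map u).prod) * (m'.map v).prod := by
    simp only [star_mul, mul_assoc]
  split_ifs with heq
  · obtain ⟨rfl, rfl⟩ := heq
    exact hu.star_mul_map_mul_self hv l m z
  rw [hregroup]
  by_cases hll : l = l'
  · subst hll
    rw [hu.star_prod_map_mul_map_mul_prod_map,
      hv.star_prod_map_mul_map_mul_prod_map_of_ne hvo hm (fun hmm => heq ⟨rfl, hmm⟩)]
  · rw [hu.star_prod_map_mul_map_mul_prod_map_of_ne huo hl hll, mul_zero, zero_mul]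

theorem prod_map_mul_prod_map_mul_map_foldl [Monoid M] [MonoidHomClass F M R]
    (l : List ι) (m : List κ) :
    (l.map u).prod * (m.map v).prod * π (m.foldl τ (l.foldl σ 1)) =
      (l.map u).prod * (m.map v).prod := by
  rw [mul_assoc, ← hv.map_mul_prod_map, ← mul_assoc, hu.prod_map_mul_map_foldl_one]

theorem mul_map_mul_star_eq_mul_map_mul_star [Monoid M] [MonoidHomClass F M R]
    (l l' : List ι) (m m' : List κ) (y : M) :
    (l.map u).prod * (m.map v).prod * π y * star (m'.map v).prod * star (l'.map u).prod =
      (l.map u).prod * (m.map v).prod *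
          π (m.foldl τ (l.foldl σ 1) * y * m'.foldl τ (l'.foldl σ 1)) *
        star (m'.map v).prod * star (l'.map u).prod := by
  have hsa : star (π (m'.foldl τ (l'.foldl σ 1))) = π (m'.foldl τ (l'.foldl σ 1)) := by
    rw [← hu.star_mul_map_mul_self hv, map_one, mul_one, star_mul, star_star]
  calc (l.map u).prod * (m.map v).prod * π y * star (m'.map v).prod * star (l'.map u).prod
      = (l.map u).prod * (m.map v).prod * π (m.foldl τ (l.foldl σ 1)) * π y *
          star ((l'.map u).prod * (m'.map v).prod * π (m'.foldl τ (l'.foldl σ 1))) := by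
        rw [hu.prod_map_mul_prod_map_mul_map_foldl hv, hu.prod_map_mul_prod_map_mul_map_foldl hv,
          star_mul, mul_assoc]
    _ = _ := by rw [star_mul, hsa, star_mul, map_mul, map_mul]; simp only [mul_assoc]

theorem star_mul_mul_map_mul_star_mul_eq_ite [Monoid M] [MonoidHomClass F M R]
    (huo : Pairwise fun i j => star (u i) * u j = 0)
    (hvo : Pairwise fun i j => star (v i) * v j = 0) {l l₁ l₂ l' : List ι} {m m₁ m₂ m' : List κ}
    (hl₁ : l.length = l₁.length) (hm₁ : m.length = m₁.length)
    (hl₂ : l₂.length = l'.length) (hm₂ : m₂.length = m'.length) (y : M) :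
    star (m.map v).prod * star (l.map u).prod *
        ((l₁.map u).prod * (m₁.map v).prod * π y * star (m₂.map v).prod * star (l₂.map u).prod) *
        ((l'.map u).prod * (m'.map v).prod) =
      if (l = l₁ ∧ m = m₁) ∧ (l₂ = l' ∧ m₂ = m') then
        π (m.foldl τ (l.foldl σ 1) * y * m'.foldl τ (l'.foldl σ 1)) else 0 := by
  have hregroup : star (m.map v).prod * star (l.map u).prod *
        ((l₁.map u).prod * (m₁.map v).prod * π y * star (m₂.map v).prod * star (l₂.map u).prod) *
        ((l'.map u).prod * (m'.map v).prod) =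
      star ((l.map u).prod * (m.map v).prod) * π 1 * ((l₁.map u).prod * (m₁.map v).prod) * π y *
        (star ((l₂.map u).prod * (m₂.map v).prod) * π 1 * ((l'.map u).prod * (m'.map v).prod)) := by
    simp only [map_one, mul_one, star_mul, mul_assoc]
  rw [hregroup, hu.star_mul_map_mul_eq_ite hv huo hvo hl₁ hm₁,
    hu.star_mul_map_mul_eq_ite hv huo hvo hl₂ hm₂]
  split_ifs with h₁ h₂ <;> simp_all [map_mul]

end IsSymbolicRep

theorem summands_vanish_of_sum_eq_zero_general
    (T : CTDS A Sρ Sη)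
    (π : A →⋆ₐ[ℂ] B) (hπ : Function.Injective π)
    (s : Sρ → B) (t : Sη → B)
    (hspi : ∀ α, s α * star (s α) * s α = s α)
    (htpi : ∀ a, t a * star (t a) * t a = t a)
    (hs1 : ∑ β, s β * star (s β) = 1)
    (hs2 : ∀ (x : A) (α : Sρ), π x * (s α * star (s α)) = s α * star (s α) * π x)
    (hs3 : ∀ (x : A) (α : Sρ), star (s α) * π x * s α = π (T.rs.ρ α x))
    (ht1 : ∑ b, t b * star (t b) = 1)
    (ht2 : ∀ (x : A) (a : Sη), π x * (t a * star (t a)) = t a * star (t a) * π x)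
    (ht3 : ∀ (x : A) (a : Sη), star (t a) * π x * t a = π (T.es.ρ a x))
    (j k : ℕ)
    (x : (Fin j → Sρ) → (Fin k → Sη) → (Fin k → Sη) → (Fin j → Sρ) → A)
    (hsum : ∑ μ : Fin j → Sρ, ∑ ν : Fin j → Sρ, ∑ ζ : Fin k → Sη, ∑ ξ : Fin k → Sη,
        ((List.ofFn μ).map s).prod * ((List.ofFn ζ).map t).prod * π (x μ ζ ξ ν) *
          star (((List.ofFn ξ).map t).prod) * star (((List.ofFn ν).map s).prod) = 0) :
    ∀ (μ ν : Fin j → Sρ) (ζ ξ : Fin k → Sη),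
      etaW T (List.ofFn ζ) (rhoW T (List.ofFn μ) 1) * x μ ζ ξ ν *
          etaW T (List.ofFn ξ) (rhoW T (List.ofFn ν) 1) = 0 ∧
      ((List.ofFn μ).map s).prod * ((List.ofFn ζ).map t).prod * π (x μ ζ ξ ν) *
          star (((List.ofFn ξ).map t).prod) * star (((List.ofFn ν).map s).prod) = 0 := by
  intro μ ν ζ ξ
  have hs : IsSymbolicRep π s fun y α => T.rs.ρ α y := ⟨hspi, hs2, hs3⟩
  have ht : IsSymbolicRep π t fun y a => T.es.ρ a y := ⟨htpi, ht2, ht3⟩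
  have hconj := fun μ' ν' ζ' ξ' => hs.star_mul_mul_map_mul_star_mul_eq_ite ht
    (pairwise_star_mul_eq_zero_of_sum_mul_star_eq_one hspi hs1)
    (pairwise_star_mul_eq_zero_of_sum_mul_star_eq_one htpi ht1)
    (l := List.ofFn μ) (m := List.ofFn ζ) (l' := List.ofFn ν) (m' := List.ofFn ξ)
    (l₁ := List.ofFn μ') (m₁ := List.ofFn ζ') (l₂ := List.ofFn ν') (m₂ := List.ofFn ξ')
    (by simp) (by simp) (by simp) (by simp) (x μ' ζ' ξ' ν')
  have hcoeff : π (etaW T (List.ofFn ζ) (rhoW T (List.ofFn μ) 1) * x μ ζ ξ ν *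
      etaW T (List.ofFn ξ) (rhoW T (List.ofFn ν) 1)) = 0 := by
    have := congrArg (fun b => star ((List.ofFn ζ).map t).prod * star ((List.ofFn μ).map s).prod *
      b * (((List.ofFn ν).map s).prod * ((List.ofFn ξ).map t).prod)) hsum
    simp only [mul_sum, sum_mul, hconj, mul_zero, zero_mul] at this
    simpa [ite_and, etaW, rhoW] using this
  have hA := hπ (hcoeff.trans (map_zero π).symm)
  refine ⟨hA, ?_⟩
  rw [hs.mul_map_mul_star_eq_mul_map_mul_star ht]
  simp only [etaW, rhoW] at hA
  rw [hA, map_zero, mul_zero, zero_mul, zero_mul]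

/-- If a sum `Σ s_μ t_ζ π(x_{μ,ζ,ξ,ν}) t_ξ* s_ν*` over all words `μ, ν` of
length `j` and `ζ, ξ` of length `k` vanishes, then each coefficient satisfies
`η_ζ(ρ_μ(1)) x_{μ,ζ,ξ,ν} η_ξ(ρ_ν(1)) = 0`, and each summand vanishes. -/
theorem summands_vanish_of_sum_eq_zero
    (T : CTDS A Sρ Sη)
    (π : A →⋆ₐ[ℂ] B) (hπ : Function.Injective π)
    (s : Sρ → B) (t : Sη → B)
    (hspi : ∀ α, s α * star (s α) * s α = s α)
    (htpi : ∀ a, t a * star (t a) * t a = t a)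
    (hs1 : ∑ β, s β * star (s β) = 1)
    (hs2 : ∀ (x : A) (α : Sρ), π x * (s α * star (s α)) = s α * star (s α) * π x)
    (hs3 : ∀ (x : A) (α : Sρ), star (s α) * π x * s α = π (T.rs.ρ α x))
    (ht1 : ∑ b, t b * star (t b) = 1)
    (ht2 : ∀ (x : A) (a : Sη), π x * (t a * star (t a)) = t a * star (t a) * π x)
    (ht3 : ∀ (x : A) (a : Sη), star (t a) * π x * t a = π (T.es.ρ a x))
    (hst : ∀ p : T.SigmaKappa, s p.1.1 * t p.1.2 = t (T.κ p).1.1 * s (T.κ p).1.2)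
    (j k : ℕ)
    (x : (Fin j → Sρ) → (Fin k → Sη) → (Fin k → Sη) → (Fin j → Sρ) → A)
    (hsum : ∑ μ : Fin j → Sρ, ∑ ν : Fin j → Sρ, ∑ ζ : Fin k → Sη, ∑ ξ : Fin k → Sη,
        ((List.ofFn μ).map s).prod * ((List.ofFn ζ).map t).prod * π (x μ ζ ξ ν) *
          star (((List.ofFn ξ).map t).prod) * star (((List.ofFn ν).map s).prod) = 0) :
    ∀ (μ ν : Fin j → Sρ) (ζ ξ : Fin k → Sη),
      etaW T (List.ofFn ζ) (rhoW T (List.ofFn μ) 1) * x μ ζ ξ ν *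
          etaW T (List.ofFn ξ) (rhoW T (List.ofFn ν) 1) = 0 ∧
      ((List.ofFn μ).map s).prod * ((List.ofFn ζ).map t).prod * π (x μ ζ ξ ν) *
          star (((List.ofFn ξ).map t).prod) * star (((List.ofFn ν).map s).prod) = 0 :=
  summands_vanish_of_sum_eq_zero_general T π hπ s t hspi htpi hs1 hs2 hs3 ht1 ht2 ht3 j k x hsum
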